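/- Let ε > 0 and let Z be a random variable on {0,1}^m. Suppose that for every non-empty set S ⊆ [m], |Pr[⊕_{i∈S} Z_i = 0] − Pr[⊕_{i∈S} Z_i = 1]| ≤ ε·(2m)^{−|S|}. Then for every z ∈ {0,1}^m, (1−ε)·2^{−m} ≤ Pr[Z = z] ≤ (1+ε)·2^{−m}. -/

import Mathlib

/-!
Expand the law `μ` in the Walsh basis `χ_S(z) = (-1)^{⊕_{i∈S} z_i}` of functions on `{0,1}^m`.
The coefficient of `χ_S` is `2^{-m}` times the signed bias of the parity `⊕_{i∈S} Z_i`; the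
coefficient of `χ_∅` is `2^{-m}` since `μ` has total mass one. Hence `|2^m μ(z) - 1|` is at most
the sum of the biases of the nonempty parities, which under the hypothesis is at most
`ε ((1 + 1/(2m))^m - 1) ≤ ε (e^{1/2} - 1) ≤ ε`.
-/

/-- The probability, under the law `μ` of a random bitstring `Z ∈ {0,1}^m`, that the XOR of
the bits indexed by `S` equals `b`. -/
noncomputable def prParity {m : ℕ} (μ : (Fin m → Bool) → ℝ) (S : Finset (Fin m))
    (b : ZMod 2) : ℝ :=
  ∑ z : Fin m → Bool, if (∑ i ∈ S, if z i then (1 : ZMod 2) else 0) = b then μ z else 0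

open Finset

lemma one_add_inv_two_mul_pow_le_two (n : ℕ) : (1 + 1 / (2 * n : ℝ)) ^ n ≤ 2 := by
  have h_exp := Real.one_sub_div_pow_le_exp_neg (n := n) (t := -1 / 2)
    (by linarith [n.cast_nonneg (α := ℝ)])
  rw [show 1 - -1 / 2 / (n : ℝ) = 1 + 1 / (2 * n) by ring, neg_div, neg_neg] at h_exp
  have h_sq : Real.exp (1 / 2) ^ 2 < 2 ^ 2 := by
    rw [← Real.exp_nat_mul]
    norm_num
    linarith [Real.exp_one_lt_d9]
  exact h_exp.trans (pow_lt_pow_iff_left₀ (Real.exp_pos _).le (by norm_num) two_ne_zero |>.1 h_sq).le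

section Walsh

variable {ι : Type*}

lemma zmodTwo_eq_zero_or_one (b : ZMod 2) : b = 0 ∨ b = 1 := by
  revert b
  decide

noncomputable def signChar : AddChar (ZMod 2) ℝ :=
  AddChar.zmodChar 2 (by norm_num : (-1 : ℝ) ^ 2 = 1)

lemma signChar_apply (b : ZMod 2) : signChar b = if b = 0 then 1 else -1 := by
  obtain rfl | rfl := zmodTwo_eq_zero_or_one b
  · simp [signChar]
  · simp [signChar, AddChar.zmodChar_apply, ZMod.val_one]

lemma signChar_sum (S : Finset ι) (f : ι → ZMod 2) :
    signChar (∑ i ∈ S, f i) = ∏ i ∈ S, signChar (f i) :=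
  map_prod signChar.toMonoidHom (fun i => Multiplicative.ofAdd (f i)) S

def parity (S : Finset ι) (z : ι → Bool) : ZMod 2 := ∑ i ∈ S, if z i then 1 else 0

noncomputable def walsh (S : Finset ι) (z : ι → Bool) : ℝ := signChar (parity S z)

@[simp]
lemma walsh_empty (z : ι → Bool) : walsh ∅ z = 1 := by
  simp [walsh, parity]

lemma walsh_eq_prod (S : Finset ι) (z : ι → Bool) :
    walsh S z = ∏ i ∈ S, if z i then -1 else 1 := by
  rw [walsh, parity, signChar_sum]
  refine prod_congr rfl fun i _ => ?_
  cases z i <;> simp [signChar_apply]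

lemma abs_walsh (S : Finset ι) (z : ι → Bool) : |walsh S z| = 1 := by
  rw [walsh, signChar_apply]
  split_ifs <;> simp

lemma walsh_mul_walsh (S : Finset ι) (z w : ι → Bool) :
    walsh S z * walsh S w = ∏ i ∈ S, if z i = w i then 1 else -1 := by
  rw [walsh_eq_prod, walsh_eq_prod, ← prod_mul_distrib]
  refine prod_congr rfl fun i _ => ?_
  cases z i <;> cases w i <;> norm_num

variable [Fintype ι] [DecidableEq ι]

lemma sum_walsh_mul_walsh (z w : ι → Bool) :
    ∑ S : Finset ι, walsh S z * walsh S w = if z = w then 2 ^ Fintype.card ι else 0 := by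
  have h_factor : ∀ i, 1 + (if z i = w i then (1 : ℝ) else -1) = if z i = w i then 2 else 0 := by
    intro i
    split_ifs <;> norm_num
  simp_rw [walsh_mul_walsh, ← powerset_univ, ← prod_one_add, h_factor, prod_ite_zero, prod_const,
    card_univ]
  simp [funext_iff]

lemma two_pow_card_mul_eq_sum_walsh (μ : (ι → Bool) → ℝ) (z : ι → Bool) :
    2 ^ Fintype.card ι * μ z = ∑ S : Finset ι, walsh S z * ∑ w, walsh S w * μ w := by
  simp_rw [mul_sum, ← mul_assoc]
  rw [sum_comm]
  simp_rw [← sum_mul, sum_walsh_mul_walsh, ite_mul, zero_mul, sum_ite_eq, mem_univ, if_true]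

lemma sum_nonempty_pow_card (x : ℝ) :
    ∑ S : Finset ι with S.Nonempty, x ^ #S = (1 + x) ^ Fintype.card ι - 1 := by
  have h := Fintype.sum_pow_mul_eq_add_pow ι x 1
  rw [← sum_filter_add_sum_filter_not univ (·.Nonempty)] at h
  simp [not_nonempty_iff_eq_empty, filter_eq'] at h
  rw [add_comm 1 x]
  linarith

lemma abs_two_pow_card_mul_sub_one_le (μ : (ι → Bool) → ℝ) (hμ1 : ∑ z, μ z = 1) {ε : ℝ} (hε : 0 ≤ ε)
    (hbias : ∀ S : Finset ι, S.Nonempty →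
      |∑ w, walsh S w * μ w| ≤ ε / (2 * (Fintype.card ι : ℝ)) ^ #S)
    (z : ι → Bool) : |2 ^ Fintype.card ι * μ z - 1| ≤ ε := by
  set n := Fintype.card ι
  have h_split : 2 ^ n * μ z - 1 = ∑ S with S.Nonempty, walsh S z * ∑ w, walsh S w * μ w := by
    rw [two_pow_card_mul_eq_sum_walsh, ← sum_filter_add_sum_filter_not univ (·.Nonempty)]
    simp [not_nonempty_iff_eq_empty, filter_eq', hμ1]
  calc |2 ^ n * μ z - 1|
      ≤ ∑ S with S.Nonempty, |walsh S z * ∑ w, walsh S w * μ w| := by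
        rw [h_split]
        exact abs_sum_le_sum_abs _ _
    _ ≤ ∑ S with S.Nonempty, ε * (1 / (2 * n : ℝ)) ^ #S := by
        refine sum_le_sum fun S hS => ?_
        rw [abs_mul, abs_walsh, one_mul, div_pow, one_pow, mul_one_div]
        exact hbias S (mem_filter.1 hS).2
    _ = ε * ((1 + 1 / (2 * n : ℝ)) ^ n - 1) := by
        rw [← mul_sum, sum_nonempty_pow_card]
    _ ≤ ε := mul_le_of_le_one_right hε (by linarith [one_add_inv_two_mul_pow_le_two n])

end Walsh

lemma prParity_zero_sub_prParity_one {m : ℕ} (μ : (Fin m → Bool) → ℝ) (S : Finset (Fin m)) :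
    prParity μ S 0 - prParity μ S 1 = ∑ z, walsh S z * μ z := by
  rw [prParity, prParity, ← sum_sub_distrib]
  refine sum_congr rfl fun z _ => ?_
  change (if parity S z = 0 then μ z else 0) - (if parity S z = 1 then μ z else 0) = _
  rw [walsh, signChar_apply]
  obtain h | h := zmodTwo_eq_zero_or_one (parity S z) <;> simp [h]

theorem stmt7 {m : ℕ} (ε : ℝ) (hε : 0 < ε) (μ : (Fin m → Bool) → ℝ)
    (hμ1 : ∑ z, μ z = 1)
    (hbias : ∀ S : Finset (Fin m), S.Nonempty →
      |prParity μ S 0 - prParity μ S 1| ≤ ε / (2 * (m : ℝ)) ^ S.card) :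
    ∀ z, (1 - ε) * (1 / 2 ^ m) ≤ μ z ∧ μ z ≤ (1 + ε) * (1 / 2 ^ m) := by
  intro z
  have h := abs_two_pow_card_mul_sub_one_le μ hμ1 hε.le
    (by simpa only [Fintype.card_fin, ← prParity_zero_sub_prParity_one] using hbias) z
  rw [Fintype.card_fin, abs_le] at h
  have h_pos : (0 : ℝ) < 2 ^ m := by positivity
  rw [mul_one_div, mul_one_div, div_le_iff₀ h_pos, le_div_iff₀ h_pos]
  constructor <;> linarith
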